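/- arXiv:1711.09754 — 2 statements merged into one kernel-verified Lean document; each statement's English description precedes it below -/
import Mathlib

section
/- Let 0 < ε ≤ 3/4, r₀ > 0, μ < 0 and σ ≥ 0. Then the sum over all nonzero integers m with μ + ((1-ε)·m² - 1/4)/r₀² ≤ 0 of |μ + ((1-ε)·m² - 1/4)/r₀²|^σ is at most (2·r₀/√(1-ε))·|μ|^{σ+1/2} + (1/√(1-ε))·|μ|^σ. -/
theorem summation_step (ε r₀ μ σ : ℝ) (hε0 : 0 < ε) (hε : ε ≤ 3 / 4) (hr₀ : 0 < r₀)
    (hμ : μ < 0) (hσ : 0 ≤ σ) :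
    ∑' m : {m : ℤ // m ≠ 0 ∧ μ + ((1 - ε) * (m : ℝ) ^ 2 - 1 / 4) / r₀ ^ 2 ≤ 0},
        |μ + ((1 - ε) * ((m : ℤ) : ℝ) ^ 2 - 1 / 4) / r₀ ^ 2| ^ σ ≤
      2 * r₀ / Real.sqrt (1 - ε) * |μ| ^ (σ + 1 / 2) +
        1 / Real.sqrt (1 - ε) * |μ| ^ σ := by
  have h1ε : (0:ℝ) < 1 - ε := by linarith
  have hr2 : (0:ℝ) < r₀ ^ 2 := by positivity
  have hμ0 : (0:ℝ) < |μ| := abs_pos.mpr hμ.ne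
  have hμabs : |μ| = -μ := abs_of_neg hμ
  set A : ℝ := |μ| * r₀ ^ 2 + 1 / 4 with hA
  have hA0 : (0:ℝ) ≤ A := by positivity
  set B : ℝ := Real.sqrt A / Real.sqrt (1 - ε) with hB
  have hB0 : (0:ℝ) ≤ B := by positivity
  set N : ℕ := ⌊B⌋₊ with hN
  set T : Finset ℤ := Finset.Icc (-(N:ℤ)) N \ {0} with hT
  have hmem : ∀ m : ℤ, m ≠ 0 → μ + ((1 - ε) * (m : ℝ) ^ 2 - 1 / 4) / r₀ ^ 2 ≤ 0 →
      m ∈ T := by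
    intro m hm0 hmle
    have h1 : (1 - ε) * (m:ℝ)^2 - 1/4 ≤ -μ * r₀^2 := by
      have := (div_le_iff₀ hr2).mp (by linarith : ((1 - ε) * (m:ℝ)^2 - 1/4) / r₀^2 ≤ -μ)
      linarith
    have h2 : (m:ℝ)^2 ≤ A / (1 - ε) := by
      rw [le_div_iff₀ h1ε, hA, hμabs]; nlinarith
    have h3 : |(m:ℝ)| ≤ B := by
      have := Real.sqrt_le_sqrt h2
      rwa [Real.sqrt_sq_eq_abs, Real.sqrt_div hA0, ← hB] at this
    have h4 : (m.natAbs : ℝ) ≤ B := by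
      rw [Nat.cast_natAbs]
      push_cast
      exact h3
    have h5 : m.natAbs ≤ N := Nat.le_floor (by exact_mod_cast h4)
    simp only [hT, Finset.mem_sdiff, Finset.mem_Icc, Finset.mem_singleton]
    omega
  have hfin : {m : ℤ | m ≠ 0 ∧ μ + ((1 - ε) * (m : ℝ) ^ 2 - 1 / 4) / r₀ ^ 2 ≤ 0}.Finite :=
    Set.Finite.subset T.finite_toSet (fun m hm => hmem m hm.1 hm.2)
  haveI : Fintype {m : ℤ // m ≠ 0 ∧ μ + ((1 - ε) * (m : ℝ) ^ 2 - 1 / 4) / r₀ ^ 2 ≤ 0} :=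
    hfin.fintype
  rw [tsum_fintype]
  have hterm : ∀ x : {m : ℤ // m ≠ 0 ∧ μ + ((1 - ε) * (m : ℝ) ^ 2 - 1 / 4) / r₀ ^ 2 ≤ 0},
      |μ + ((1 - ε) * ((x : ℤ) : ℝ) ^ 2 - 1 / 4) / r₀ ^ 2| ^ σ ≤ |μ| ^ σ := by
    rintro ⟨m, hm0, hmle⟩
    have hm1 : (1:ℝ) ≤ (m:ℝ)^2 := by
      have : (1:ℤ) ≤ m^2 := by rcases lt_or_gt_of_ne hm0 with h|h <;> nlinarith
      exact_mod_cast this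
    have hs : 0 ≤ ((1 - ε) * (m:ℝ)^2 - 1/4) / r₀^2 := by
      apply div_nonneg _ hr2.le; nlinarith
    have habs : |μ + ((1 - ε) * (m:ℝ)^2 - 1/4) / r₀^2| ≤ |μ| := by
      rw [abs_of_nonpos hmle, hμabs]; linarith
    exact Real.rpow_le_rpow (abs_nonneg _) habs hσ
  have hcard : Fintype.card {m : ℤ // m ≠ 0 ∧ μ + ((1 - ε) * (m : ℝ) ^ 2 - 1 / 4) / r₀ ^ 2 ≤ 0}
      ≤ 2 * N := by
    have h0T : (0:ℤ) ∈ Finset.Icc (-(N:ℤ)) N := by simp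
    have hTcard : T.card = 2 * N := by
      rw [hT, Finset.card_sdiff_of_subset (by simpa using h0T), Int.card_Icc]
      simp
      omega
    calc Fintype.card {m : ℤ // m ≠ 0 ∧ μ + ((1 - ε) * (m : ℝ) ^ 2 - 1 / 4) / r₀ ^ 2 ≤ 0}
          ≤ Fintype.card T := Fintype.card_le_of_injective
          (fun x => (⟨x.1, hmem x.1 x.2.1 x.2.2⟩ : T))
          (fun a b h => Subtype.ext (Subtype.mk_eq_mk.mp h))
      _ = T.card := Fintype.card_coe T
      _ = 2 * N := hTcard
  have hsum : ∑ x : {m : ℤ // m ≠ 0 ∧ μ + ((1 - ε) * (m : ℝ) ^ 2 - 1 / 4) / r₀ ^ 2 ≤ 0},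
      |μ + ((1 - ε) * ((x : ℤ) : ℝ) ^ 2 - 1 / 4) / r₀ ^ 2| ^ σ ≤ (2 * N : ℝ) * |μ| ^ σ := by
    calc _ ≤ Finset.univ.card • |μ| ^ σ :=
          Finset.sum_le_card_nsmul _ _ _ (fun x _ => hterm x)
      _ = (Fintype.card _ : ℝ) * |μ| ^ σ := by rw [Finset.card_univ, nsmul_eq_mul]
      _ ≤ (2 * N : ℝ) * |μ| ^ σ := by
          apply mul_le_mul_of_nonneg_right _ (Real.rpow_nonneg hμ0.le σ)
          exact_mod_cast hcard
  refine hsum.trans ?_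
  -- now prove (2N) * |μ|^σ ≤ RHS
  have hNB : (N:ℝ) ≤ B := Nat.floor_le hB0
  have hsA : Real.sqrt A ≤ r₀ * Real.sqrt |μ| + 1/2 := by
    have h1 : A ≤ (r₀ * Real.sqrt |μ| + 1/2)^2 := by
      have hsq : Real.sqrt |μ| ^ 2 = |μ| := Real.sq_sqrt hμ0.le
      have hs0 : 0 ≤ Real.sqrt |μ| := Real.sqrt_nonneg _
      nlinarith
    calc Real.sqrt A ≤ Real.sqrt ((r₀ * Real.sqrt |μ| + 1/2)^2) := Real.sqrt_le_sqrt h1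
      _ = r₀ * Real.sqrt |μ| + 1/2 := Real.sqrt_sq (by positivity)
  have hsε : 0 < Real.sqrt (1 - ε) := Real.sqrt_pos.mpr h1ε
  have hBle : B ≤ (r₀ * Real.sqrt |μ| + 1/2) / Real.sqrt (1 - ε) :=
    div_le_div_of_nonneg_right hsA hsε.le |>.trans_eq rfl
  have hrpow : |μ| ^ (σ + 1/2 : ℝ) = |μ| ^ σ * Real.sqrt |μ| := by
    rw [Real.rpow_add hμ0, Real.rpow_def_of_pos hμ0, ← Real.sqrt_eq_rpow]
  rw [hrpow]
  have hpow0 : 0 ≤ |μ| ^ σ := Real.rpow_nonneg hμ0.le σ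
  have h2N : (2 * N : ℝ) ≤ 2 * (r₀ * Real.sqrt |μ| + 1/2) / Real.sqrt (1 - ε) := by
    have h := hNB.trans hBle
    rw [mul_div_assoc]
    linarith
  calc (2 * N : ℝ) * |μ| ^ σ ≤ (2 * (r₀ * Real.sqrt |μ| + 1/2) / Real.sqrt (1 - ε)) * |μ| ^ σ :=
        mul_le_mul_of_nonneg_right h2N hpow0
    _ = 2 * r₀ / Real.sqrt (1 - ε) * (|μ| ^ σ * Real.sqrt |μ|) + 1 / Real.sqrt (1 - ε) * |μ| ^ σ := by
        field_simp
end

section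
/- Let μ₁ ≤ μ₂ ≤ … be a nondecreasing sequence of negative real numbers, let 0 < ε ≤ 3/4, r₀ > 0 and σ ≥ 0. Then the double sum over k ≥ 1 and nonzero integers m with μ_k + ((1-ε)m² - 1/4)/r₀² ≤ 0 of |μ_k + ((1-ε)m² - 1/4)/r₀²|^σ is bounded by (2r₀/√(1-ε))·Σ_k |μ_k|^{σ+1/2} + (1/√(1-ε))·Σ_k |μ_k|^σ, whenever the right-hand side series converge. -/
theorem double_sum_bound (ε r₀ σ : ℝ) (hε0 : 0 < ε) (hε : ε ≤ 3 / 4) (hr₀ : 0 < r₀)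
    (hσ : 0 ≤ σ) (μ : ℕ → ℝ) (hmono : Monotone μ) (hneg : ∀ k, μ k < 0)
    (hsum1 : Summable fun k => |μ k| ^ (σ + 1 / 2))
    (hsum2 : Summable fun k => |μ k| ^ σ) :
    ∑' k : ℕ,
        ∑' m : {m : ℤ // m ≠ 0 ∧ μ k + ((1 - ε) * (m : ℝ) ^ 2 - 1 / 4) / r₀ ^ 2 ≤ 0},
          |μ k + ((1 - ε) * ((m : ℤ) : ℝ) ^ 2 - 1 / 4) / r₀ ^ 2| ^ σ ≤
      2 * r₀ / Real.sqrt (1 - ε) * ∑' k, |μ k| ^ (σ + 1 / 2) +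
        1 / Real.sqrt (1 - ε) * ∑' k, |μ k| ^ σ := by
  have hε1 : (0:ℝ) < 1 - ε := by linarith
  have hsq : 0 < Real.sqrt (1 - ε) := Real.sqrt_pos.mpr hε1
  set g : ℕ → ℝ := fun k => 2 * r₀ / Real.sqrt (1 - ε) * |μ k| ^ (σ + 1/2)
      + 1 / Real.sqrt (1 - ε) * |μ k| ^ σ with hg
  have key : ∀ k, (∑' m : {m : ℤ // m ≠ 0 ∧ μ k + ((1 - ε) * (m : ℝ) ^ 2 - 1 / 4) / r₀ ^ 2 ≤ 0},
      |μ k + ((1 - ε) * ((m : ℤ) : ℝ) ^ 2 - 1 / 4) / r₀ ^ 2| ^ σ) ≤ g k := by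
    intro k
    have hμ := hneg k
    have hμabs : 0 < |μ k| := abs_pos.mpr hμ.ne
    set A : ℝ := (1/4 + |μ k| * r₀^2) / (1 - ε) with hA
    have hA0 : 0 ≤ A := by rw [hA]; positivity
    set N : ℕ := ⌊Real.sqrt A⌋₊ with hN
    set S : Set ℤ := {m : ℤ | m ≠ 0 ∧ μ k + ((1 - ε) * (m : ℝ) ^ 2 - 1 / 4) / r₀ ^ 2 ≤ 0} with hS
    set f : ℤ → ℝ := fun m => |μ k + ((1 - ε) * (m : ℝ) ^ 2 - 1 / 4) / r₀ ^ 2| ^ σ with hf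
    set F : Finset ℤ := (Finset.Icc (-(N:ℤ)) N).erase 0 with hF
    have hSF : ∀ m : ℤ, m ∈ S → m ∈ F := by
      intro m hm
      obtain ⟨hm0, hle⟩ := hm
      have hr2 : (0:ℝ) < r₀^2 := by positivity
      have hm2 : (m:ℝ)^2 ≤ A := by
        rw [hA, le_div_iff₀ hε1]
        have h1 : ((1 - ε) * (m : ℝ) ^ 2 - 1 / 4) / r₀ ^ 2 ≤ |μ k| := by
          rw [abs_of_neg hμ]; linarith
        rw [div_le_iff₀ hr2] at h1
        nlinarith
      have habs : (m.natAbs : ℝ) ≤ Real.sqrt A := by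
        rw [Real.le_sqrt (by positivity) hA0]
        calc ((m.natAbs : ℝ))^2 = |(m:ℝ)|^2 := by rw [Nat.cast_natAbs, Int.cast_abs]
          _ = (m:ℝ)^2 := sq_abs _
          _ ≤ A := hm2
      have hNa : m.natAbs ≤ N := Nat.le_floor habs
      have hNa' : |m| ≤ (N:ℤ) := by
        rw [Int.abs_eq_natAbs]; exact_mod_cast hNa
      rw [hF, Finset.mem_erase, Finset.mem_Icc]
      exact ⟨hm0, (abs_le.mp hNa').1, (abs_le.mp hNa').2⟩
    have hsub : (∑' m : {m : ℤ // m ≠ 0 ∧ μ k + ((1 - ε) * (m : ℝ) ^ 2 - 1 / 4) / r₀ ^ 2 ≤ 0},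
        |μ k + ((1 - ε) * ((m : ℤ) : ℝ) ^ 2 - 1 / 4) / r₀ ^ 2| ^ σ)
        = ∑' m : ℤ, S.indicator f m := tsum_subtype S f
    have heq : ∑' m : ℤ, S.indicator f m = ∑ m ∈ F, S.indicator f m := by
      refine tsum_eq_sum ?_
      intro m hm
      exact Set.indicator_of_notMem (fun hmS => hm (hSF m hmS)) f
    have hterm : ∀ m ∈ F, S.indicator f m ≤ |μ k| ^ σ := by
      intro m _
      by_cases hmS : m ∈ S
      · rw [Set.indicator_of_mem hmS]
        obtain ⟨hm0, hle⟩ := hmS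
        have h1m : (1:ℝ) ≤ (m:ℝ)^2 := by
          have h1 : (1:ℤ) ≤ m^2 := by
            have := Int.one_le_abs hm0
            nlinarith [sq_abs m]
          exact_mod_cast h1
        have hv : 0 ≤ ((1 - ε) * (m : ℝ) ^ 2 - 1 / 4) / r₀ ^ 2 := by
          apply div_nonneg _ (by positivity)
          nlinarith
        simp only [hf]
        rw [abs_of_nonpos hle, abs_of_neg hμ]
        exact Real.rpow_le_rpow (by linarith) (by linarith) hσ
      · rw [Set.indicator_of_notMem hmS]
        positivity
    have hcard : F.card = 2 * N := by
      rw [hF, Finset.card_erase_of_mem (by simp [Finset.mem_Icc]), Int.card_Icc]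
      omega
    have hNle : (N:ℝ) ≤ Real.sqrt A := Nat.floor_le (Real.sqrt_nonneg A)
    have hsμ : Real.sqrt |μ k| ^ 2 = |μ k| := Real.sq_sqrt hμabs.le
    have hsμ0 : 0 ≤ Real.sqrt |μ k| := Real.sqrt_nonneg _
    have hsqrtA : Real.sqrt A ≤ (1/2 + r₀ * Real.sqrt |μ k|) / Real.sqrt (1 - ε) := by
      rw [hA, Real.sqrt_div (by positivity)]
      gcongr
      calc Real.sqrt (1/4 + |μ k| * r₀^2)
          ≤ Real.sqrt ((1/2 + r₀ * Real.sqrt |μ k|)^2) := by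
            apply Real.sqrt_le_sqrt; nlinarith
        _ = 1/2 + r₀ * Real.sqrt |μ k| := Real.sqrt_sq (by positivity)
    have hμσ : 0 ≤ |μ k| ^ σ := Real.rpow_nonneg (abs_nonneg _) σ
    have hchain : (∑' m : {m : ℤ // m ≠ 0 ∧ μ k + ((1 - ε) * (m : ℝ) ^ 2 - 1 / 4) / r₀ ^ 2 ≤ 0},
        |μ k + ((1 - ε) * ((m : ℤ) : ℝ) ^ 2 - 1 / 4) / r₀ ^ 2| ^ σ)
        ≤ (2 * N : ℝ) * |μ k| ^ σ := by
      rw [hsub, heq]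
      calc ∑ m ∈ F, S.indicator f m ≤ ∑ _m ∈ F, |μ k| ^ σ := Finset.sum_le_sum hterm
        _ = (F.card : ℝ) * |μ k| ^ σ := by rw [Finset.sum_const, nsmul_eq_mul]
        _ = (2 * N : ℝ) * |μ k| ^ σ := by rw [hcard]; push_cast; ring
    refine hchain.trans ?_
    have hrpow : |μ k| ^ (σ + 1/2) = |μ k| ^ σ * Real.sqrt |μ k| := by
      rw [Real.rpow_add hμabs, Real.sqrt_eq_rpow]
    have h2N : (2 * N : ℝ) * |μ k| ^ σ ≤ 2 * ((1/2 + r₀ * Real.sqrt |μ k|) / Real.sqrt (1 - ε)) * |μ k| ^ σ := by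
      have : (N:ℝ) ≤ (1/2 + r₀ * Real.sqrt |μ k|) / Real.sqrt (1 - ε) := hNle.trans hsqrtA
      nlinarith
    refine le_of_le_of_eq h2N ?_
    rw [hg]
    simp only
    rw [hrpow]
    field_simp
    ring
  have hs1 : Summable fun k => 2 * r₀ / Real.sqrt (1 - ε) * |μ k| ^ (σ + 1/2) :=
    hsum1.mul_left _
  have hs2 : Summable fun k => 1 / Real.sqrt (1 - ε) * |μ k| ^ σ := hsum2.mul_left _
  have hgsum : Summable g := hs1.add hs2
  have hnonneg : ∀ k, 0 ≤ (∑' m : {m : ℤ // m ≠ 0 ∧ μ k + ((1 - ε) * (m : ℝ) ^ 2 - 1 / 4) / r₀ ^ 2 ≤ 0},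
      |μ k + ((1 - ε) * ((m : ℤ) : ℝ) ^ 2 - 1 / 4) / r₀ ^ 2| ^ σ) := fun k =>
    tsum_nonneg fun m => Real.rpow_nonneg (abs_nonneg _) σ
  have hLHS : Summable fun k =>
      (∑' m : {m : ℤ // m ≠ 0 ∧ μ k + ((1 - ε) * (m : ℝ) ^ 2 - 1 / 4) / r₀ ^ 2 ≤ 0},
        |μ k + ((1 - ε) * ((m : ℤ) : ℝ) ^ 2 - 1 / 4) / r₀ ^ 2| ^ σ) :=
    Summable.of_nonneg_of_le hnonneg key hgsum
  calc ∑' k : ℕ,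
        ∑' m : {m : ℤ // m ≠ 0 ∧ μ k + ((1 - ε) * (m : ℝ) ^ 2 - 1 / 4) / r₀ ^ 2 ≤ 0},
          |μ k + ((1 - ε) * ((m : ℤ) : ℝ) ^ 2 - 1 / 4) / r₀ ^ 2| ^ σ
      ≤ ∑' k, g k := Summable.tsum_le_tsum key hLHS hgsum
    _ = 2 * r₀ / Real.sqrt (1 - ε) * ∑' k, |μ k| ^ (σ + 1 / 2) +
        1 / Real.sqrt (1 - ε) * ∑' k, |μ k| ^ σ := by
      rw [hg, Summable.tsum_add hs1 hs2, tsum_mul_left, tsum_mul_left]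
end
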